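/- Assume K = [a,b] is a nondegenerate interval and Ũ is the subshift of finite type determined by the allowed word set W ⊆ {1,…,m}^L. Let E = {(u,v) ∈ {1,…,m}^{L−1} × {1,…,m}^{L−1} : (u_2,…,u_{L−1}) = (v_1,…,v_{L−2}) and (u_1,…,u_{L−1},v_{L−1}) ∈ W}. Then for each word u ∈ {1,…,m}^{L−1}: ⋃_{(u,v)∈E} f_{u_1}(J_v) ⊆ J_u, and for distinct v, v' with (u,v) ∈ E and (u,v') ∈ E one has f_{u_1}(J_v) ∩ f_{u_1}(J_{v'}) = ∅. -/

import Mathlib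

/-!
Prepending `u₁` to an admissible sequence that starts with `v` gives an admissible sequence
starting with `u` whenever `(u, v) ∈ E`, so `f_{u₁}` maps `K_v` into `K_u`; being increasing
and affine it maps `J_v` into `J_u`.

For disjointness, the points with a coding that begins with a fixed word `w` of length `n` form
the interval `f_w(K)`, where `f_w = f_{w₁} ∘ ⋯ ∘ f_{wₙ}`, so `J_{v'}` lies inside it. A point of
`K_v` in `J_{v'}` would thus have a coding beginning with `v'` besides its unique coding, which
begins with `v`. On the line two convex hulls can only meet if one of the sets meets the hull
of the other, and `f_{u₁}` is injective.
-/

open Filter Topology Set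

/-- `ifsIter m f i n = f_{i₁} ∘ ⋯ ∘ f_{iₙ} (0)`. -/
noncomputable def ifsIter (m : ℕ) (f : Fin m → ℝ → ℝ) : (ℕ → Fin m) → ℕ → ℝ
  | _, 0 => 0
  | i, n + 1 => f (i 0) (ifsIter m f (fun k => i (k + 1)) n)

open Bornology NNReal

section Composition

variable {ι α : Type*} {f : ι → α → α}

def ifsComp (f : ι → α → α) : (ℕ → ι) → ℕ → α → α
  | _, 0 => id
  | d, n + 1 => f (d 0) ∘ ifsComp f (fun k => d (k + 1)) n

lemma ifsComp_succ_right (d : ℕ → ι) (n : ℕ) :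
    ifsComp f d (n + 1) = ifsComp f d n ∘ f (d n) := by
  induction n generalizing d with
  | zero => rfl
  | succ n ih => exact congrArg (f (d 0) ∘ ·) (ih _)

lemma ifsComp_congr {d d' : ℕ → ι} {n : ℕ} (h : d' ∈ PiNat.cylinder d n) :
    ifsComp f d' n = ifsComp f d n := by
  induction n generalizing d d' with
  | zero => rfl
  | succ n ih =>
    simp only [ifsComp, h 0 n.succ_pos]
    rw [ih fun i hi => h (i + 1) (by omega)]

lemma mapsTo_ifsComp {K : Set α} (hK : ⋃ j, f j '' K ⊆ K) (d : ℕ → ι) (n : ℕ) :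
    MapsTo (ifsComp f d n) K K := by
  induction n generalizing d with
  | zero => exact mapsTo_id K
  | succ n ih =>
    exact (mapsTo_iff_image_subset.2 ((subset_iUnion _ (d 0)).trans hK)).comp (ih _)

lemma lipschitzWith_ifsComp [PseudoEMetricSpace α] {ρ : ℝ≥0} (hf : ∀ j, LipschitzWith ρ (f j))
    (d : ℕ → ι) (n : ℕ) : LipschitzWith (ρ ^ n) (ifsComp f d n) := by
  induction n generalizing d with
  | zero => exact LipschitzWith.id
  | succ n ih => rw [pow_succ']; exact (hf _).comp (ih _)

end Composition

lemma exists_lipschitzWith_lt_one {ι : Type*} [Fintype ι] {r a : ι → ℝ} {f : ι → ℝ → ℝ}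
    (hf : ∀ j x, f j x = r j * x + a j) (hr : ∀ j, |r j| < 1) :
    ∃ ρ : ℝ≥0, ρ < 1 ∧ ∀ j, LipschitzWith ρ (f j) := by
  refine ⟨Finset.univ.sup fun j => ‖r j‖₊, (Finset.sup_lt_iff zero_lt_one).2 fun j _ => ?_,
    fun j => LipschitzWith.weaken ?_ (Finset.le_sup (f := fun j => ‖r j‖₊) (Finset.mem_univ j))⟩
  · rw [← NNReal.coe_lt_coe, coe_nnnorm]; exact hr j
  · refine LipschitzWith.of_dist_le_mul fun x y => ?_
    rw [hf, hf, coe_nnnorm, Real.dist_eq, Real.dist_eq, Real.norm_eq_abs, ← abs_mul]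
    exact (congrArg abs (by ring)).le

section Coding

variable {m : ℕ} {f : Fin m → ℝ → ℝ} {proj : (ℕ → Fin m) → ℝ}

lemma ifsIter_eq_ifsComp (d : ℕ → Fin m) (n : ℕ) : ifsIter m f d n = ifsComp f d n 0 := by
  induction n generalizing d with
  | zero => rfl
  | succ n ih => exact congrArg (f (d 0)) (ih _)

lemma proj_eq_apply_proj_tail (hproj : ∀ i, Tendsto (ifsIter m f i) atTop (𝓝 (proj i)))
    (d : ℕ → Fin m) (hf : Continuous (f (d 0))) :
    proj d = f (d 0) (proj fun k => d (k + 1)) :=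
  tendsto_nhds_unique ((hproj d).comp (tendsto_add_atTop_nat 1))
    ((hf.tendsto _).comp (hproj _))

lemma proj_eq_ifsComp (hproj : ∀ i, Tendsto (ifsIter m f i) atTop (𝓝 (proj i)))
    (hf : ∀ j, Continuous (f j)) (d : ℕ → Fin m) (n : ℕ) :
    proj d = ifsComp f d n (proj fun k => d (k + n)) := by
  induction n generalizing d with
  | zero => rfl
  | succ n ih =>
    rw [proj_eq_apply_proj_tail hproj d (hf _), ih]
    rfl

variable {ρ : ℝ≥0} {K : Set ℝ}

lemma tendsto_ifsComp_proj (hproj : ∀ i, Tendsto (ifsIter m f i) atTop (𝓝 (proj i)))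
    (hf : ∀ j, LipschitzWith ρ (f j)) (hρ : ρ < 1) (hK : IsBounded K) {x : ℕ → ℝ}
    (hx : ∀ n, x n ∈ K) (d : ℕ → Fin m) :
    Tendsto (fun n => ifsComp f d n (x n)) atTop (𝓝 (proj d)) := by
  obtain ⟨C, hC⟩ := hK.subset_closedBall 0
  refine tendsto_of_tendsto_of_dist (hproj d) (squeeze_zero (fun _ => dist_nonneg) (fun n => ?_)
    (by simpa using (tendsto_pow_atTop_nhds_zero_of_lt_one ρ.2 hρ).mul_const C))
  calc dist (ifsIter m f d n) (ifsComp f d n (x n))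
      ≤ ρ ^ n * dist 0 (x n) := by
        rw [ifsIter_eq_ifsComp, ← NNReal.coe_pow]
        exact (lipschitzWith_ifsComp hf d n).dist_le_mul _ _
    _ ≤ ρ ^ n * C := by
        rw [dist_comm]
        exact mul_le_mul_of_nonneg_left (hC (hx n)) (by positivity)

lemma proj_mem (hproj : ∀ i, Tendsto (ifsIter m f i) atTop (𝓝 (proj i)))
    (hf : ∀ j, LipschitzWith ρ (f j)) (hρ : ρ < 1) (hKc : IsClosed K) (hne : K.Nonempty)
    (hKattr : K = ⋃ j, f j '' K) (d : ℕ → Fin m) : proj d ∈ K := by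
  obtain ⟨x, hx⟩ := hne
  exact hKc.mem_of_tendsto
    (tendsto_ifsComp_proj hproj hf hρ isBounded_singleton (fun _ => rfl) d)
    (Eventually.of_forall fun n => mapsTo_ifsComp hKattr.symm.subset d n hx)

lemma exists_proj_eq (hproj : ∀ i, Tendsto (ifsIter m f i) atTop (𝓝 (proj i)))
    (hf : ∀ j, LipschitzWith ρ (f j)) (hρ : ρ < 1) (hKb : IsBounded K)
    (hKattr : K = ⋃ j, f j '' K) {x : ℝ} (hx : x ∈ K) : ∃ e, proj e = x := by
  have hpre : ∀ y : K, ∃ j, ∃ z : K, f j z = y := fun y => by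
    obtain ⟨j, z, hz, hzy⟩ := mem_iUnion.1 (hKattr.subset y.2)
    exact ⟨j, ⟨z, hz⟩, hzy⟩
  choose g h hgh using hpre
  set s : ℕ → K := fun n => h^[n] ⟨x, hx⟩
  have hs : ∀ n, ifsComp f (fun k => g (s k)) n (s n) = x := by
    intro n
    induction n with
    | zero => rfl
    | succ n ih =>
      have hsucc : s (n + 1) = h (s n) := Function.iterate_succ_apply' _ _ _
      rw [ifsComp_succ_right, Function.comp_apply, hsucc, hgh, ih]
  refine ⟨_, tendsto_nhds_unique
    (tendsto_ifsComp_proj hproj hf hρ hKb (fun n => (s n).2) fun k => g (s k)) ?_⟩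
  simp only [hs, tendsto_const_nhds]

lemma image_cylinder_eq (hproj : ∀ i, Tendsto (ifsIter m f i) atTop (𝓝 (proj i)))
    (hf : ∀ j, LipschitzWith ρ (f j)) (hρ : ρ < 1) (hKc : IsClosed K) (hKb : IsBounded K)
    (hne : K.Nonempty) (hKattr : K = ⋃ j, f j '' K) (w : ℕ → Fin m) (n : ℕ) :
    proj '' PiNat.cylinder w n = ifsComp f w n '' K := by
  have hcont := fun j => (hf j).continuous
  apply Subset.antisymm
  · rintro _ ⟨d, hd, rfl⟩
    rw [proj_eq_ifsComp hproj hcont d n, ifsComp_congr hd]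
    exact mem_image_of_mem _ (proj_mem hproj hf hρ hKc hne hKattr _)
  · rintro _ ⟨c, hc, rfl⟩
    obtain ⟨e, rfl⟩ := exists_proj_eq hproj hf hρ hKb hKattr hc
    set d : ℕ → Fin m := fun k => if k < n then w k else e (k - n)
    have hd : d ∈ PiNat.cylinder w n := fun i hi => if_pos hi
    have htail : (fun k => d (k + n)) = e := funext fun k => by simp [d]
    exact ⟨d, hd, by rw [proj_eq_ifsComp hproj hcont d n, htail, ifsComp_congr hd]⟩

lemma ordConnected_image_cylinder (hproj : ∀ i, Tendsto (ifsIter m f i) atTop (𝓝 (proj i)))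
    (hf : ∀ j, LipschitzWith ρ (f j)) (hρ : ρ < 1) (hKc : IsClosed K) (hKb : IsBounded K)
    (hKo : K.OrdConnected) (hne : K.Nonempty) (hKattr : K = ⋃ j, f j '' K)
    (w : ℕ → Fin m) (n : ℕ) : (proj '' PiNat.cylinder w n).OrdConnected := by
  rw [image_cylinder_eq hproj hf hρ hKc hKb hne hKattr]
  exact isPreconnected_iff_ordConnected.1 ((isPreconnected_iff_ordConnected.2 hKo).image _
    (lipschitzWith_ifsComp hf w n).continuous.continuousOn)

end Coding

lemma mem_cylinder_of_proj_mem_convexHull {ι : Type*} {proj : (ℕ → ι) → ℝ} {w d : ℕ → ι}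
    {n : ℕ} (hcyl : (proj '' PiNat.cylinder w n).OrdConnected)
    (huniq : ∀ e, proj e = proj d → e = d)
    (hd : proj d ∈ convexHull ℝ (proj '' PiNat.cylinder w n)) : d ∈ PiNat.cylinder w n := by
  rw [hcyl.convex.convexHull_eq] at hd
  obtain ⟨e, he, hed⟩ := hd
  exact huniq e hed ▸ he

lemma disjoint_convexHull_of_disjoint_convexHull {S T : Set ℝ}
    (hST : Disjoint S (convexHull ℝ T)) (hTS : Disjoint T (convexHull ℝ S)) :
    Disjoint (convexHull ℝ S) (convexHull ℝ T) := by
  have hup : ∀ V : Set ℝ, convexHull ℝ V ⊆ upperClosure V := fun V =>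
    convexHull_min subset_upperClosure (upperClosure V).upper.ordConnected.convex
  have hlow : ∀ V : Set ℝ, convexHull ℝ V ⊆ lowerClosure V := fun V =>
    convexHull_min subset_lowerClosure (lowerClosure V).lower.ordConnected.convex
  have hIcc : ∀ V : Set ℝ, ∀ p ∈ V, ∀ q ∈ V, Icc p q ⊆ convexHull ℝ V := fun V p hp q hq =>
    (convex_convexHull ℝ V).ordConnected.out (subset_convexHull ℝ V hp) (subset_convexHull ℝ V hq)
  rw [Set.disjoint_left]
  intro y hyS hyT
  obtain ⟨p, hp, hpy⟩ := hup S hyS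
  obtain ⟨q, hq, hyq⟩ := hlow S hyS
  obtain ⟨p', hp', hpy'⟩ := hup T hyT
  obtain ⟨q', hq', hyq'⟩ := hlow T hyT
  rcases le_total p' p with h | h
  · exact hST.notMem_of_mem_left hp (hIcc T p' hp' q' hq' ⟨h, hpy.trans hyq'⟩)
  · exact hTS.notMem_of_mem_left hp' (hIcc S p hp q hq ⟨h, hpy'.trans hyq⟩)

lemma image_convexHull_subset_of_mapsTo {g : ℝ → ℝ} (hg : Monotone g) {S T : Set ℝ}
    (h : MapsTo g S T) : g '' convexHull ℝ S ⊆ convexHull ℝ T :=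
  image_subset_iff.2 <| convexHull_min (h.mono_right (subset_convexHull ℝ T))
    ((convex_convexHull ℝ T).ordConnected.preimage_mono hg).convex

section PrefixImage

variable {ι α : Type*} {ℓ : ℕ}

def prefixImage {n : ℕ} (proj : (ℕ → ι) → α) (S : Set (ℕ → ι)) (u : Fin n → ι) : Set α :=
  {y | ∃ d ∈ S, (∀ i : Fin n, d i = u i) ∧ proj d = y}

variable {u v : Fin (ℓ + 1) → ι} {d : ℕ → ι}

lemma cons_apply_of_edge (hdv : ∀ i : Fin (ℓ + 1), d i = v i)
    (huv : ∀ i : Fin ℓ, u i.succ = v i.castSucc) (i : Fin (ℓ + 1)) :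
    Stream'.cons (u 0) d i = u i := by
  cases i using Fin.cases with
  | zero => rfl
  | succ i => exact (hdv i.castSucc).trans (huv i).symm

lemma cons_window_mem {W : Set (Fin (ℓ + 2) → ι)}
    (hd : ∀ k : ℕ, (fun j : Fin (ℓ + 2) => d (k + j)) ∈ W) (hdv : ∀ i : Fin (ℓ + 1), d i = v i)
    (huv : ∀ i : Fin ℓ, u i.succ = v i.castSucc) (hW : Fin.snoc u (v (Fin.last ℓ)) ∈ W)
    (k : ℕ) : (fun j : Fin (ℓ + 2) => Stream'.cons (u 0) d (k + j)) ∈ W := by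
  cases k with
  | zero =>
    convert hW using 1
    funext j
    cases j using Fin.lastCases with
    | last => rw [Fin.snoc_last, zero_add]; exact hdv (Fin.last ℓ)
    | cast i => simpa using cons_apply_of_edge hdv huv i
  | succ k =>
    convert hd k using 3 with j
    rw [Nat.add_right_comm]
    rfl

lemma mapsTo_prefixImage_of_edge {proj : (ℕ → ι) → α} {f : ι → α → α}
    {W : Set (Fin (ℓ + 2) → ι)} (hcons : ∀ j d, proj (Stream'.cons j d) = f j (proj d))
    (huv : ∀ i : Fin ℓ, u i.succ = v i.castSucc) (hW : Fin.snoc u (v (Fin.last ℓ)) ∈ W) :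
    MapsTo (f (u 0))
      (prefixImage proj {x | ∀ k : ℕ, (fun j : Fin (ℓ + 2) => x (k + j)) ∈ W} v)
      (prefixImage proj {x | ∀ k : ℕ, (fun j : Fin (ℓ + 2) => x (k + j)) ∈ W} u) := by
  rintro _ ⟨d, hd, hdv, rfl⟩
  exact ⟨Stream'.cons (u 0) d, cons_window_mem hd hdv huv hW, cons_apply_of_edge hdv huv,
    hcons _ _⟩

lemma disjoint_prefixImage_convexHull {proj : (ℕ → ι) → ℝ} {S : Set (ℕ → ι)}
    (hcyl : ∀ w, (proj '' PiNat.cylinder w (ℓ + 1)).OrdConnected)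
    (huniq : ∀ d ∈ S, ∀ e, proj e = proj d → e = d) (huv : u ≠ v) :
    Disjoint (prefixImage proj S u) (convexHull ℝ (prefixImage proj S v)) := by
  rw [Set.disjoint_left]
  rintro _ ⟨d, hdS, hdu, rfl⟩ hd
  obtain ⟨_, w, -, hwv, rfl⟩ := convexHull_nonempty_iff.1 ⟨_, hd⟩
  have hsub : prefixImage proj S v ⊆ proj '' PiNat.cylinder w (ℓ + 1) := by
    rintro _ ⟨e, -, hev, rfl⟩
    exact ⟨e, fun i hi => (hev ⟨i, hi⟩).trans (hwv ⟨i, hi⟩).symm, rfl⟩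
  have hdw := mem_cylinder_of_proj_mem_convexHull (hcyl w) (huniq d hdS) (convexHull_mono hsub hd)
  exact huv (funext fun i => by rw [← hdu i, hdw i i.2, hwv i])

end PrefixImage

theorem stmt15_general (m : ℕ) (r a : Fin m → ℝ)
    (hr : ∀ j, 0 < r j ∧ r j < 1)
    (f : Fin m → ℝ → ℝ) (hf : ∀ j x, f j x = r j * x + a j)
    (A B : ℝ) (hAB : A < B)
    (K : Set ℝ) (hK : K = Icc A B) (hKattr : K = ⋃ j, f j '' K)
    (proj : (ℕ → Fin m) → ℝ)
    (hproj : ∀ i : ℕ → Fin m, Tendsto (ifsIter m f i) atTop (𝓝 (proj i)))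
    (U : Set ℝ)
    (hU : U = {x | x ∈ K ∧ ∃! i : ℕ → Fin m, Tendsto (ifsIter m f i) atTop (𝓝 x)})
    (Ut : Set (ℕ → Fin m)) (hUt : Ut = proj ⁻¹' U)
    (ℓ : ℕ) (W : Set (Fin (ℓ + 2) → Fin m))
    (hSFT : Ut = {x : ℕ → Fin m | ∀ k : ℕ, (fun j : Fin (ℓ + 2) => x (k + j)) ∈ W})
    (Ku : (Fin (ℓ + 1) → Fin m) → Set ℝ)
    (hKu : ∀ u, Ku u = {y | ∃ d ∈ Ut, (∀ i : Fin (ℓ + 1), d i = u i) ∧ proj d = y})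
    (E : (Fin (ℓ + 1) → Fin m) → (Fin (ℓ + 1) → Fin m) → Prop)
    (hE : ∀ u v, E u v ↔
      (∀ i : Fin ℓ, u i.succ = v i.castSucc) ∧ Fin.snoc u (v (Fin.last ℓ)) ∈ W) :
    ∀ u : Fin (ℓ + 1) → Fin m,
      (⋃ (v : Fin (ℓ + 1) → Fin m) (_ : E u v),
        f (u 0) '' convexHull ℝ (Ku v)) ⊆ convexHull ℝ (Ku u) ∧
      ∀ v v' : Fin (ℓ + 1) → Fin m, E u v → E u v' → v ≠ v' →
        f (u 0) '' convexHull ℝ (Ku v) ∩ f (u 0) '' convexHull ℝ (Ku v') = ∅ := by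
  intro u
  obtain rfl : Ku = prefixImage proj Ut := funext hKu
  obtain ⟨ρ, hρ, hlip⟩ :=
    exists_lipschitzWith_lt_one hf fun j => (abs_of_pos (hr j).1).symm ▸ (hr j).2
  have hmono : StrictMono (f (u 0)) := fun x y hxy => by
    simpa only [hf] using add_lt_add_left (mul_lt_mul_of_pos_left hxy (hr (u 0)).1) (a (u 0))
  have hcoding : ∀ d ∈ Ut, ∀ e, proj e = proj d → e = d := fun d hd e he => by
    rw [hUt, mem_preimage, hU] at hd
    exact hd.2.unique (he ▸ hproj e) (hproj d)
  have hcyl : ∀ w, (proj '' PiNat.cylinder w (ℓ + 1)).OrdConnected := fun w => by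
    subst hK
    exact ordConnected_image_cylinder hproj hlip hρ isClosed_Icc (Metric.isBounded_Icc A B)
      ordConnected_Icc (nonempty_Icc.2 hAB.le) hKattr w _
  refine ⟨iUnion₂_subset fun v huv => ?_, fun v v' huv _ hvv' => ?_⟩
  · obtain ⟨hshift, hW⟩ := (hE u v).1 huv
    rw [hSFT]
    exact image_convexHull_subset_of_mapsTo hmono.monotone (mapsTo_prefixImage_of_edge
      (fun j d => proj_eq_apply_proj_tail hproj _ (hlip j).continuous) hshift hW)
  · rw [← image_inter hmono.injective, image_eq_empty, ← disjoint_iff_inter_eq_empty]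
    exact disjoint_convexHull_of_disjoint_convexHull
      (disjoint_prefixImage_convexHull hcyl hcoding hvv')
      (disjoint_prefixImage_convexHull hcyl hcoding hvv'.symm)

/-- in the graph-directed construction for `Ũ`, for each word `u` of
length `L−1` we have `⋃_{(u,v)∈E} f_{u₁}(J_v) ⊆ J_u`, and the sets `f_{u₁}(J_v)` for
distinct edges `(u,v), (u,v')` are disjoint. -/
theorem stmt15 (m : ℕ) (hm : 2 ≤ m) (r a : Fin m → ℝ)
    (hr : ∀ j, 0 < r j ∧ r j < 1)
    (f : Fin m → ℝ → ℝ) (hf : ∀ j x, f j x = r j * x + a j)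
    (A B : ℝ) (hAB : A < B)
    (K : Set ℝ) (hK : K = Icc A B) (hKattr : K = ⋃ j, f j '' K)
    (proj : (ℕ → Fin m) → ℝ)
    (hproj : ∀ i : ℕ → Fin m, Tendsto (ifsIter m f i) atTop (𝓝 (proj i)))
    (U : Set ℝ)
    (hU : U = {x | x ∈ K ∧ ∃! i : ℕ → Fin m, Tendsto (ifsIter m f i) atTop (𝓝 x)})
    (Ut : Set (ℕ → Fin m)) (hUt : Ut = proj ⁻¹' U)
    (ℓ : ℕ) (W : Set (Fin (ℓ + 2) → Fin m))
    (hSFT : Ut = {x : ℕ → Fin m | ∀ k : ℕ, (fun j : Fin (ℓ + 2) => x (k + j)) ∈ W})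
    (Ku : (Fin (ℓ + 1) → Fin m) → Set ℝ)
    (hKu : ∀ u, Ku u = {y | ∃ d ∈ Ut, (∀ i : Fin (ℓ + 1), d i = u i) ∧ proj d = y})
    (E : (Fin (ℓ + 1) → Fin m) → (Fin (ℓ + 1) → Fin m) → Prop)
    (hE : ∀ u v, E u v ↔
      (∀ i : Fin ℓ, u i.succ = v i.castSucc) ∧ Fin.snoc u (v (Fin.last ℓ)) ∈ W) :
    ∀ u : Fin (ℓ + 1) → Fin m,
      (⋃ (v : Fin (ℓ + 1) → Fin m) (_ : E u v),
        f (u 0) '' convexHull ℝ (Ku v)) ⊆ convexHull ℝ (Ku u) ∧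
      ∀ v v' : Fin (ℓ + 1) → Fin m, E u v → E u v' → v ≠ v' →
        f (u 0) '' convexHull ℝ (Ku v) ∩ f (u 0) '' convexHull ℝ (Ku v') = ∅ :=
  stmt15_general m r a hr f hf A B hAB K hK hKattr proj hproj U hU Ut hUt ℓ W hSFT Ku hKu E hE
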